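/- arXiv:1903.07292 — 2 statements merged into one kernel-verified Lean document; each statement's English description precedes it below -/
import Mathlib

section
/- Let G be a 2-connected finite simple graph on vertex set V with n = |V| vertices, and let U ⊆ V with 2 ≤ |U| ≤ n − 1 be such that the set E(G)∖E(U) of edges of G not having both endpoints in U is nonempty. If the induced subgraph G[V∖U] is connected, then: (a) at least two vertices of U are incident to edges of E(G)∖E(U); and (b) m ≥ p − 1, where m = |E(G)∖E(U)| and p is the number of vertices incident to some edge of E(G)∖E(U). -/
variable {V : Type*}

/-- The set of vertices incident to some edge of `F`. -/
def vertSet (F : Set (Sym2 V)) : Set V :=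
  {v : V | ∃ e ∈ F, v ∈ e}

/-- The set of edges of `G` with both endpoints in `U`. -/
def edgesWithin (G : SimpleGraph V) (U : Set V) : Set (Sym2 V) :=
  {e ∈ G.edgeSet | ∀ v ∈ e, v ∈ U}

/-- A graph is 2-connected if it is connected, has at least 3 vertices, and the
induced subgraph obtained by deleting any single vertex remains connected. -/
def TwoConnected (G : SimpleGraph V) : Prop :=
  G.Connected ∧ 3 ≤ Nat.card V ∧ ∀ v : V, (G.induce {v}ᶜ).Connected

/-- In a connected graph, every vertex other than `r` has a neighbor closer to `r`. -/
lemma exists_adj_dist_lt (G : SimpleGraph V) (h : G.Connected) {v r : V} (hne : v ≠ r) :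
    ∃ u, G.Adj v u ∧ G.dist u r < G.dist v r := by
  obtain ⟨p, hp⟩ := h.exists_walk_length_eq_dist v r
  have hpos : 0 < G.dist v r := h.pos_dist_of_ne hne
  cases p with
  | nil => exact absurd rfl hne
  | cons ha q =>
    refine ⟨_, ha, ?_⟩
    have h1 := G.dist_le q
    simp [SimpleGraph.Walk.length_cons] at hp
    omega

/-- A finite connected graph has at least `n - 1` edges. -/
lemma conn_card_le {W : Type*} [Finite W] (G : SimpleGraph W) (h : G.Connected) :
    Nat.card W ≤ G.edgeSet.ncard + 1 := by
  obtain ⟨r⟩ := h.nonempty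
  classical
  have key : ∀ v ∈ ({r}ᶜ : Set W), ∃ u, G.Adj v u ∧ G.dist u r < G.dist v r := by
    intro v hv
    exact exists_adj_dist_lt G h (by simpa using hv)
  choose! f hf1 hf2 using key
  have hmaps : ∀ v ∈ ({r}ᶜ : Set W), s(v, f v) ∈ G.edgeSet := fun v hv =>
    (G.mem_edgeSet).2 (hf1 v hv)
  have hinj : Set.InjOn (fun v => s(v, f v)) ({r}ᶜ : Set W) := by
    intro a ha b hb hab
    simp only [Sym2.eq_iff] at hab
    rcases hab with ⟨h1, _⟩ | ⟨h1, h2⟩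
    · exact h1
    · exfalso
      have d1 := hf2 a ha
      have d2 := hf2 b hb
      rw [h2] at d1
      rw [← h1] at d2
      omega
  have hle : ({r}ᶜ : Set W).ncard ≤ G.edgeSet.ncard :=
    Set.ncard_le_ncard_of_injOn _ hmaps hinj (Set.toFinite _)
  have hcompl : ({r} : Set W).ncard + ({r}ᶜ : Set W).ncard = Nat.card W :=
    Set.ncard_add_ncard_compl _
  simp [Set.ncard_singleton] at hcompl
  omega

/-- Let `G` be a 2-connected finite simple graph on `n`
vertices and `U ⊆ V` with `2 ≤ |U| ≤ n - 1` such that the set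
`F = E(G) \ E(U)` of edges not having both endpoints in `U` is nonempty.
If `G[V \ U]` is connected then (a) at least two vertices of `U` are incident
to edges of `F`, and (b) `|F| ≥ p - 1` where `p` is the number of vertices
incident to some edge of `F`. -/
theorem two_of_U_meet_and_edge_count [Fintype V] (G : SimpleGraph V)
    (hG : TwoConnected G) (U : Set V)
    (hU2 : 2 ≤ U.ncard) (hUn : U.ncard ≤ Fintype.card V - 1)
    (hF : (G.edgeSet \ edgesWithin G U).Nonempty)
    (hconn : (G.induce Uᶜ).Connected) :
    2 ≤ (U ∩ vertSet (G.edgeSet \ edgesWithin G U)).ncard ∧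
    (vertSet (G.edgeSet \ edgesWithin G U)).ncard - 1 ≤
      (G.edgeSet \ edgesWithin G U).ncard := by
  classical
  set F : Set (Sym2 V) := G.edgeSet \ edgesWithin G U with hFdef
  obtain ⟨hGconn, hG3, hG2c⟩ := hG
  -- `Uᶜ` is nonempty
  obtain ⟨w0⟩ := hconn.nonempty
  have hw0 : (w0 : V) ∈ Uᶜ := w0.2
  -- every edge with an endpoint outside U is in F
  have edge_mem_F : ∀ {a b : V}, G.Adj a b → b ∉ U → s(a, b) ∈ F := by
    intro a b hab hb
    refine ⟨(G.mem_edgeSet).2 hab, fun hmem => ?_⟩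
    exact hb (hmem.2 b (by simp))
  -- part (a): at least two vertices of U touch F
  have parta : 2 ≤ (U ∩ vertSet F).ncard := by
    by_contra hk
    push_neg at hk
    have hk1 : (U ∩ vertSet F).ncard ≤ 1 := by omega
    -- there is a vertex of U touching F (boundary dart from connectivity)
    obtain ⟨u, hu⟩ : U.Nonempty := by
      rcases Set.eq_empty_or_nonempty U with h | h
      · simp [h] at hU2
      · exact h
    obtain ⟨p⟩ := hGconn.preconnected u w0
    obtain ⟨d, _, hdS, hdS'⟩ := p.exists_boundary_dart U hu hw0
    have hd_mem : d.fst ∈ U ∩ vertSet F :=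
      ⟨hdS, ⟨s(d.fst, d.snd), edge_mem_F d.adj hdS', Sym2.mem_mk_left _ _⟩⟩
    set u₀ := d.fst with hu₀
    have hsingle : ∀ x ∈ U ∩ vertSet F, x = u₀ := by
      intro x hx
      by_contra hne
      have : 2 ≤ (U ∩ vertSet F).ncard := by
        have : ({x, u₀} : Set V) ⊆ U ∩ vertSet F := by
          intro y hy; rcases hy with rfl | rfl; exacts [hx, hd_mem]
        calc 2 = ({x, u₀} : Set V).ncard := (Set.ncard_pair hne).symm
          _ ≤ _ := Set.ncard_le_ncard this (Set.toFinite _)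
      omega
    -- find u₁ ∈ U, u₁ ≠ u₀
    obtain ⟨u₁, hu₁U, hu₁ne⟩ : ∃ u₁ ∈ U, u₁ ≠ u₀ :=
      Set.exists_ne_of_one_lt_ncard (by omega) u₀
    have hwne : (w0 : V) ≠ u₀ := fun h => hw0 (h ▸ hd_mem.1)
    -- use 2-connectivity: G - u₀ is connected
    have hcon := hG2c u₀
    obtain ⟨q⟩ := hcon.preconnected ⟨u₁, by simp [hu₁ne]⟩ ⟨w0, by simp [hwne]⟩
    obtain ⟨d', _, h1, h2⟩ := q.exists_boundary_dart {x : ({u₀}ᶜ : Set V) | ↑x ∈ U}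
      (by simp only [Set.mem_setOf_eq]; exact hu₁U)
      (by simp only [Set.mem_setOf_eq]; exact hw0)
    have hadj : G.Adj ↑d'.fst ↑d'.snd := d'.adj
    have : (↑d'.fst : V) ∈ U ∩ vertSet F :=
      ⟨h1, ⟨s(↑d'.fst, ↑d'.snd), edge_mem_F hadj h2, Sym2.mem_mk_left _ _⟩⟩
    have := hsingle _ this
    exact d'.fst.2 (by simpa using this)
  refine ⟨parta, ?_⟩
  -- part (b)
  -- every vertex outside U is in vertSet F
  have hWsub : Uᶜ ⊆ vertSet F := by
    intro x hx
    have : ∃ y, y ≠ x := by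
      have h2 : 2 ≤ Nat.card V := by omega
      have : Nontrivial V := by
        rw [← Finite.one_lt_card_iff_nontrivial]
        simpa [Nat.card_eq_fintype_card] using (show 1 < Nat.card V by omega)
      exact exists_ne x
    obtain ⟨y, hy⟩ := this
    obtain ⟨u, hadj, -⟩ := exists_adj_dist_lt G hGconn (v := x) (r := y) (Ne.symm hy)
    exact ⟨s(u, x), edge_mem_F hadj.symm hx, Sym2.mem_mk_right _ _⟩
  have hdecomp : vertSet F = Uᶜ ∪ (U ∩ vertSet F) := by
    ext x
    constructor
    · intro hx
      by_cases hxU : x ∈ U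
      · exact Or.inr ⟨hxU, hx⟩
      · exact Or.inl hxU
    · rintro (hx | hx)
      · exact hWsub hx
      · exact hx.2
  have hdisj : Disjoint (Uᶜ) (U ∩ vertSet F) :=
    Set.disjoint_left.2 fun x hx hx' => hx hx'.1
  have hp : (vertSet F).ncard = (Uᶜ).ncard + (U ∩ vertSet F).ncard := by
    have h' := Set.ncard_union_eq hdisj (Set.toFinite _) (Set.toFinite _)
    rw [← hdecomp] at h'
    exact h'
  -- S1 : edges within Uᶜ ; S2 : edges of F touching U
  set S1 : Set (Sym2 V) := edgesWithin G Uᶜ with hS1def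
  set S2 : Set (Sym2 V) := {e ∈ F | ∃ v ∈ e, v ∈ U} with hS2def
  have hS1F : S1 ⊆ F := by
    rintro e ⟨he, hall⟩
    refine ⟨he, fun hmem => ?_⟩
    induction e with
    | _ a b => exact (hall a (by simp)) (hmem.2 a (by simp))
  have hS2F : S2 ⊆ F := fun e he => he.1
  have hdisj12 : Disjoint S1 S2 := by
    rw [Set.disjoint_left]
    rintro e ⟨-, hall⟩ ⟨-, v, hv, hvU⟩
    exact (hall v hv) hvU
  -- |S1| ≥ |Uᶜ| - 1 from connectivity of G[Uᶜ]
  have hS1card : (Uᶜ : Set V).ncard ≤ S1.ncard + 1 := by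
    have h1 := conn_card_le (G.induce Uᶜ) hconn
    rw [Nat.card_coe_set_eq] at h1
    refine le_trans h1 ?_
    have hinj : Set.InjOn (Sym2.map (Subtype.val : (Uᶜ : Set V) → V))
        (G.induce Uᶜ).edgeSet :=
      (Sym2.map.injective Subtype.val_injective).injOn
    have hmaps : ∀ e ∈ (G.induce Uᶜ).edgeSet,
        Sym2.map (Subtype.val : (Uᶜ : Set V) → V) e ∈ S1 := by
      intro e he
      induction e with
      | _ a b =>
        rw [SimpleGraph.mem_edgeSet] at he
        have hadj : G.Adj ↑a ↑b := he
        refine ⟨(G.mem_edgeSet).2 hadj, ?_⟩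
        intro v hv
        simp only [Sym2.map_pair_eq, Sym2.mem_iff] at hv
        rcases hv with rfl | rfl
        exacts [a.2, b.2]
    have := Set.ncard_le_ncard_of_injOn _ hmaps hinj (Set.toFinite _)
    omega
  -- |S2| ≥ |U ∩ vertSet F|
  have hS2card : (U ∩ vertSet F).ncard ≤ S2.ncard := by
    have : Nonempty (Sym2 V) := ⟨hF.choose⟩
    have key : ∀ x ∈ U ∩ vertSet F, ∃ e ∈ F, x ∈ e := fun x hx => hx.2
    choose! g hg1 hg2 using key
    have hmaps : ∀ x ∈ U ∩ vertSet F, g x ∈ S2 := fun x hx =>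
      ⟨hg1 x hx, x, hg2 x hx, hx.1⟩
    have hinj : Set.InjOn g (U ∩ vertSet F) := by
      intro a ha b hb hab
      by_contra hne
      have hmem : a ∈ g a ∧ b ∈ g a := ⟨hg2 a ha, hab ▸ hg2 b hb⟩
      have : g a = s(a, b) := (Sym2.mem_and_mem_iff hne).1 hmem
      have hFmem := hg1 a ha
      rw [this] at hFmem
      refine hFmem.2 ⟨hFmem.1, fun v hv => ?_⟩
      simp only [Sym2.mem_iff] at hv
      rcases hv with rfl | rfl
      exacts [ha.1, hb.1]
    exact Set.ncard_le_ncard_of_injOn _ hmaps hinj (Set.toFinite _)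
  have hunion : S1.ncard + S2.ncard ≤ F.ncard := by
    rw [← Set.ncard_union_eq hdisj12 (Set.toFinite _) (Set.toFinite _)]
    exact Set.ncard_le_ncard (Set.union_subset hS1F hS2F) (Set.toFinite _)
  omega
end

section
/- Let G be a 2-connected finite simple graph, U ⊊ V(G) a proper subset inducing the subgraph H = G[U], and let \bar{H} be the complementary subgraph, i.e., the subgraph with edge set E(G)∖E(H) and vertex set the set of vertices incident to these edges. Suppose E(G)∖E(H) is nonempty, m_{\bar{H}} = n_{\bar{H}} − 1, and exactly two vertices of U are incident to edges of E(G)∖E(H). Then \bar{H} is a path joining these two vertices, all of whose internal vertices have degree 2 in G (i.e., E(G)∖E(H) is a series closure of G). -/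
variable {V : Type*}

open SimpleGraph

lemma closed_reach {G : SimpleGraph V} {S : Set V}
    (hS : ∀ x ∈ S, ∀ y, G.Adj x y → y ∈ S) :
    ∀ {u a : V}, u ∈ S → G.Reachable u a → a ∈ S := by
  intro u a hu h
  obtain ⟨p⟩ := h
  induction p with
  | nil => exact hu
  | cons h p ih => exact ih (hS _ hu _ h)

lemma exists_adj_of_reachable {G : SimpleGraph V} {u a : V}
    (h : G.Reachable u a) (hne : u ≠ a) : ∃ y, G.Adj u y := by
  obtain ⟨p⟩ := h
  cases p with
  | nil => exact absurd rfl hne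
  | cons h _ => exact ⟨_, h⟩

lemma reachable_of_mem_support {G : SimpleGraph V} {c d w : V} (p : G.Walk c d)
    (h : w ∈ p.support) : G.Reachable c w := by
  induction p with
  | nil => simp at h; exact h ▸ Reachable.refl _
  | cons hadj q ih =>
    rcases List.mem_cons.mp (by simpa using h) with h1 | h2
    · exact h1 ▸ Reachable.refl _
    · exact (hadj.reachable).trans (ih h2)

lemma aux_path [Fintype V] [DecidableEq V] (n : ℕ) :
    ∀ (H : SimpleGraph V) (_ : DecidableRel H.Adj), H.edgeFinset.card ≤ n →
    (∀ w, H.degree w ≤ 2) → ∀ u : V, H.degree u = 1 →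
    ∃ v : V, v ≠ u ∧ H.degree v = 1 ∧ ∃ W : H.Walk u v, W.IsPath ∧
      ∀ e, e ∈ W.edges ↔ e ∈ H.edgeSet ∧ ∃ a ∈ e, H.Reachable u a := by
  induction n with
  | zero =>
    intro H inst hcard hdeg u hu
    exfalso
    obtain ⟨x, hx⟩ := Finset.card_eq_one.mp hu
    have hadj : H.Adj u x := (H.mem_neighborFinset u x).mp (by simp [hx])
    have : s(u, x) ∈ H.edgeFinset := by
      rw [mem_edgeFinset]; exact hadj
    have := Finset.card_pos.mpr ⟨_, this⟩
    omega
  | succ n ih =>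
    intro H inst hcard hdeg u hu
    obtain ⟨x, hx⟩ := Finset.card_eq_one.mp hu
    have hadj : H.Adj u x := (H.mem_neighborFinset u x).mp (by simp [hx])
    have hune : u ≠ x := H.ne_of_adj hadj
    have huniq : ∀ y, H.Adj u y → y = x := by
      intro y hy
      have : y ∈ ({x} : Finset V) := hx ▸ (H.mem_neighborFinset u y).mpr hy
      simpa using this
    set H' := H.deleteEdges {s(u, x)} with hH'
    letI instH' : DecidableRel H'.Adj := Classical.decRel _
    have hH'adj : ∀ a b, H'.Adj a b ↔ H.Adj a b ∧ ¬ s(a,b) = s(u,x) := by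
      intro a b
      rw [deleteEdges_adj]
      simp
    -- edge card
    have hEss : H'.edgeFinset ⊂ H.edgeFinset := by
      constructor
      · intro e he
        rw [mem_edgeFinset] at he ⊢
        rw [edgeSet_deleteEdges] at he
        exact he.1
      · intro hsub
        have h1 : s(u,x) ∈ H.edgeFinset := by rw [mem_edgeFinset]; exact hadj
        have h2 := hsub h1
        rw [mem_edgeFinset, edgeSet_deleteEdges] at h2
        exact h2.2 rfl
    have hcard' : H'.edgeFinset.card ≤ n := by
      have := Finset.card_lt_card hEss
      omega
    -- degrees
    have hdegmono : ∀ w, H'.degree w ≤ H.degree w := by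
      intro w
      apply Finset.card_le_card
      intro y hy
      rw [mem_neighborFinset] at hy ⊢
      exact ((hH'adj w y).mp hy).1
    have hdeg' : ∀ w, H'.degree w ≤ 2 := fun w => (hdegmono w).trans (hdeg w)
    have hu'0 : H'.degree u = 0 := by
      show (H'.neighborFinset u).card = 0
      rw [Finset.card_eq_zero]
      ext y
      simp only [mem_neighborFinset, Finset.notMem_empty, iff_false]
      intro hy
      rw [hH'adj] at hy
      exact hy.2 (by rw [huniq y hy.1])
    have hdegeq : ∀ w, w ≠ u → w ≠ x → H'.degree w = H.degree w := by
      intro w hwu hwx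
      show (H'.neighborFinset w).card = (H.neighborFinset w).card
      congr 1
      ext y
      simp only [mem_neighborFinset]
      rw [hH'adj]
      constructor
      · exact fun h => h.1
      · intro h
        refine ⟨h, fun heq => ?_⟩
        rw [Sym2.eq_iff] at heq
        rcases heq with ⟨h1, _⟩ | ⟨h1, _⟩
        · exact hwu h1
        · exact hwx h1
    have hxnf : H'.neighborFinset x = (H.neighborFinset x).erase u := by
      ext y
      simp only [mem_neighborFinset, Finset.mem_erase]
      rw [hH'adj]
      constructor
      · rintro ⟨h1, h2⟩
        refine ⟨fun hy => h2 ?_, h1⟩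
        rw [hy, Sym2.eq_iff]
        right; exact ⟨rfl, rfl⟩
      · rintro ⟨h1, h2⟩
        refine ⟨h2, fun heq => ?_⟩
        rw [Sym2.eq_iff] at heq
        rcases heq with ⟨h3, _⟩ | ⟨_, h4⟩
        · exact hune h3.symm
        · exact h1 h4
    have humem : u ∈ H.neighborFinset x := (H.mem_neighborFinset x u).mpr hadj.symm
    have hxdeg' : H'.degree x = H.degree x - 1 := by
      unfold SimpleGraph.degree
      rw [hxnf, Finset.card_erase_of_mem humem]
    have hxpos : 1 ≤ H.degree x := Finset.card_pos.mpr ⟨u, humem⟩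
    rcases Nat.lt_or_ge (H.degree x) 2 with hdx | hdx
    · -- degree x = 1 : the walk is the single edge
      have hdx1 : H.degree x = 1 := by omega
      have huniqx : ∀ y, H.Adj x y → y = u := by
        intro y hy
        obtain ⟨x', hx'⟩ := Finset.card_eq_one.mp hdx1
        have h1 : y ∈ ({x'} : Finset V) := hx' ▸ (H.mem_neighborFinset x y).mpr hy
        have h2 : u ∈ ({x'} : Finset V) := hx' ▸ humem
        simp only [Finset.mem_singleton] at h1 h2
        rw [h1, h2]
      refine ⟨x, hune.symm, hdx1, Walk.cons hadj Walk.nil, ?_, ?_⟩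
      · exact Walk.IsPath.nil.cons (by simpa using hune)
      · intro e
        simp only [Walk.edges_cons, Walk.edges_nil, List.mem_singleton]
        constructor
        · rintro rfl
          exact ⟨hadj, u, by simp, Reachable.refl u⟩
        · rintro ⟨he, a, ha, hr⟩
          have hclosed : ∀ b ∈ ({u, x} : Set V), ∀ y, H.Adj b y → y ∈ ({u, x} : Set V) := by
            rintro b (rfl | hb) y hy
            · right; exact huniq y hy
            · left; rw [Set.mem_singleton_iff] at hb; subst hb; exact huniqx y hy
          have hamem : a ∈ ({u, x} : Set V) := closed_reach hclosed (by left; rfl) hr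
          obtain ⟨b, rfl⟩ := Sym2.mem_iff_exists.mp ha
          rw [mem_edgeSet] at he
          rcases hamem with rfl | ha2
          · rw [huniq b he]
          · rw [Set.mem_singleton_iff] at ha2; subst ha2
            rw [huniqx b he, Sym2.eq_swap]
    · -- degree x = 2, recurse
      have hdx2 : H.degree x = 2 := le_antisymm (hdeg x) hdx
      have hx1 : H'.degree x = 1 := by rw [hxdeg', hdx2]
      obtain ⟨v, hvx, hv1, W', hW'path, hW'edges⟩ := ih H' instH' hcard' hdeg' x hx1
      have hvu : v ≠ u := by
        rintro rfl
        rw [hu'0] at hv1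
        exact one_ne_zero hv1.symm
      have hvdeg : H.degree v = 1 := by rw [← hdegeq v hvu hvx]; exact hv1
      have hle : ∀ e ∈ W'.edges, e ∈ H.edgeSet := by
        intro e he
        have := W'.edges_subset_edgeSet he
        rw [edgeSet_deleteEdges] at this
        exact this.1
      set Wt := W'.transfer H hle with hWt
      have hWtsup : Wt.support = W'.support := Walk.support_transfer _ _
      have hWtedges : Wt.edges = W'.edges := Walk.edges_transfer _ _
      have hunotin : u ∉ W'.support := by
        intro hmem
        have hr : H'.Reachable x u := reachable_of_mem_support W' hmem
        obtain ⟨y, hy⟩ := exists_adj_of_reachable hr.symm hune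
        have : 0 < H'.degree u := by
          rw [← mem_neighborFinset] at hy
          exact Finset.card_pos.mpr ⟨y, hy⟩
        omega
      refine ⟨v, hvu, hvdeg, Walk.cons hadj Wt, ?_, ?_⟩
      · exact (hW'path.transfer hle).cons (hWtsup ▸ hunotin)
      · -- key reachability transfer claim
        have key : ∀ b : V, H.Reachable u b → b = u ∨ H'.Reachable x b := by
          have aux : ∀ {c d : V} (p : H.Walk c d),
              (c = u ∨ H'.Reachable x c) → (d = u ∨ H'.Reachable x d) := by
            intro c d p
            induction p with
            | nil => exact id
            | @cons c' m d' h q ihq =>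
              intro hc
              apply ihq
              rcases hc with rfl | hc
              · right
                rw [huniq m h]
              · by_cases heq : s(c', m) = s(u, x)
                · rw [Sym2.eq_iff] at heq
                  rcases heq with ⟨h1, h2⟩ | ⟨h1, h2⟩
                  · right; rw [h2]
                  · left; exact h2
                · right
                  exact hc.trans (Adj.reachable ((hH'adj c' m).mpr ⟨h, heq⟩))
          intro b hb
          obtain ⟨p⟩ := hb
          exact aux p (Or.inl rfl)
        intro e
        simp only [Walk.edges_cons, List.mem_cons, hWtedges]
        constructor
        · rintro (rfl | he)
          · exact ⟨hadj, u, by simp, Reachable.refl u⟩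
          · obtain ⟨he1, a, ha, hr⟩ := (hW'edges e).mp he
            rw [edgeSet_deleteEdges] at he1
            exact ⟨he1.1, a, ha, hadj.reachable.trans (hr.mono (deleteEdges_le _))⟩
        · rintro ⟨he, a, ha, hr⟩
          by_cases heq : e = s(u, x)
          · left; exact heq
          · right
            rw [hW'edges e, edgeSet_deleteEdges]
            rcases key a hr with rfl | hra
            · exfalso
              obtain ⟨b, rfl⟩ := Sym2.mem_iff_exists.mp ha
              rw [mem_edgeSet] at he
              exact heq (by rw [huniq b he])
            · exact ⟨⟨he, by simpa using heq⟩, a, ha, hra⟩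


lemma two_le_degree_of_twoConnected [Fintype V] {G : SimpleGraph V} [DecidableRel G.Adj]
    (hG : TwoConnected G) (w : V) : 2 ≤ G.degree w := by
  classical
  obtain ⟨hconn, hcard, hdel⟩ := hG
  rw [Nat.card_eq_fintype_card] at hcard
  have hnontriv : Nontrivial V := Fintype.one_lt_card_iff_nontrivial.mp (by omega)
  obtain ⟨z0, hz0⟩ := exists_ne w
  obtain ⟨x, hx⟩ : ∃ x, G.Adj w x :=
    exists_adj_of_reachable (hconn.preconnected w z0) (Ne.symm hz0)
  by_contra hlt
  push_neg at hlt
  have huniq : ∀ y, G.Adj w y → y = x := by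
    intro y hy
    by_contra hne
    have hsub : ({y, x} : Finset V) ⊆ G.neighborFinset w := by
      intro a ha
      rcases Finset.mem_insert.mp ha with h1 | h2
      · exact (G.mem_neighborFinset w a).mpr (h1 ▸ hy)
      · exact (G.mem_neighborFinset w a).mpr ((Finset.mem_singleton.mp h2) ▸ hx)
    have : 2 ≤ G.degree w := by
      have h2 : ({y, x} : Finset V).card = 2 := by
        rw [Finset.card_insert_of_notMem (by simpa using hne), Finset.card_singleton]
      calc 2 = ({y, x} : Finset V).card := h2.symm
        _ ≤ G.degree w := Finset.card_le_card hsub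
    omega
  have hwx : w ≠ x := G.ne_of_adj hx
  obtain ⟨z, hzw, hzx⟩ : ∃ z, z ≠ w ∧ z ≠ x := by
    by_contra h
    push_neg at h
    have hsub : (Finset.univ : Finset V) ⊆ {w, x} := by
      intro a _
      rcases em (a = w) with h1 | h1
      · simp [h1]
      · simp [h a h1]
    have := Finset.card_le_card hsub
    simp only [Finset.card_univ] at this
    have : ({w, x} : Finset V).card ≤ 2 := Finset.card_insert_le _ _ |>.trans (by simp)
    omega
  have hc := hdel x
  have hw' : w ∈ ({x}ᶜ : Set V) := by simpa using hwx
  have hz' : z ∈ ({x}ᶜ : Set V) := by simpa using hzx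
  have hreach := hc.preconnected ⟨w, hw'⟩ ⟨z, hz'⟩
  obtain ⟨y, hy⟩ := exists_adj_of_reachable hreach
    (fun h => hzw (congrArg Subtype.val h).symm)
  have hadj : G.Adj w ↑y := hy
  exact y.2 (by simp [huniq _ hadj])

/-- Let `G` be a 2-connected finite simple graph, `U ⊊ V` a
proper subset, and `F = E(G) \ E(U)` the edge set of the complementary
subgraph of `H = G[U]`. If `F` is nonempty, `m_{H̄} = n_{H̄} - 1` (i.e.
`|F| + 1 = |V(F)|`), and exactly two vertices of `U` are incident to edges of
`F`, then the complementary subgraph is a path joining these two vertices all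
of whose internal vertices have degree 2 in `G`. -/
theorem complement_is_series_path [Fintype V] (G : SimpleGraph V)
    (hG : TwoConnected G) (U : Set V) (hU : U ⊂ Set.univ)
    (hF : (G.edgeSet \ edgesWithin G U).Nonempty)
    (htree : (G.edgeSet \ edgesWithin G U).ncard + 1 =
      (vertSet (G.edgeSet \ edgesWithin G U)).ncard)
    (htwo : (U ∩ vertSet (G.edgeSet \ edgesWithin G U)).ncard = 2) :
    ∃ u v : V, u ≠ v ∧
      U ∩ vertSet (G.edgeSet \ edgesWithin G U) = {u, v} ∧
      ∃ W : G.Walk u v, W.IsPath ∧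
        (∀ e : Sym2 V, e ∈ W.edges ↔ e ∈ G.edgeSet \ edgesWithin G U) ∧
        ∀ w ∈ W.support, w ≠ u → w ≠ v → (G.neighborSet w).ncard = 2 := by
  classical
  letI : DecidableEq V := Classical.decEq V
  letI instG : DecidableRel G.Adj := Classical.decRel _
  set F := G.edgeSet \ edgesWithin G U with hFdef
  set H := G.deleteEdges (edgesWithin G U) with hHdef
  letI instH : DecidableRel H.Adj := Classical.decRel _
  have hHE : H.edgeSet = F := by rw [hHdef, edgeSet_deleteEdges]
  have hHadjG : ∀ a b : V, a ∉ U → (H.Adj a b ↔ G.Adj a b) := by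
    intro a b ha
    rw [hHdef, deleteEdges_adj]
    constructor
    · exact fun h => h.1
    · intro h
      refine ⟨h, fun hmem => ?_⟩
      exact ha (hmem.2 a (Sym2.mem_mk_left a b))
  have hS : ∀ w : V, w ∈ vertSet F ↔ ∃ y, H.Adj w y := by
    intro w
    constructor
    · rintro ⟨e, heF, hwe⟩
      obtain ⟨y, rfl⟩ := Sym2.mem_iff_exists.mp hwe
      rw [← hHE] at heF
      exact ⟨y, (H.mem_edgeSet).mp heF⟩
    · rintro ⟨y, hy⟩
      exact ⟨s(w, y), hHE ▸ (H.mem_edgeSet).mpr hy, Sym2.mem_mk_left w y⟩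
  -- degree facts
  have hdge : ∀ w : V, w ∉ U → H.degree w = G.degree w := by
    intro w hw
    show (H.neighborFinset w).card = (G.neighborFinset w).card
    congr 1
    ext y
    simp only [mem_neighborFinset]
    exact hHadjG w y hw
  have hout : ∀ w : V, w ∉ vertSet F → H.degree w = 0 := by
    intro w hw
    show (H.neighborFinset w).card = 0
    rw [Finset.card_eq_zero]
    ext y
    simp only [mem_neighborFinset, Finset.notMem_empty, iff_false]
    exact fun hy => hw ((hS w).mpr ⟨y, hy⟩)
  have hin : ∀ w : V, w ∈ vertSet F → 1 ≤ H.degree w := by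
    intro w hw
    obtain ⟨y, hy⟩ := (hS w).mp hw
    exact Finset.card_pos.mpr ⟨y, (H.mem_neighborFinset w y).mpr hy⟩
  have hmin : ∀ w : V, 2 ≤ G.degree w := two_le_degree_of_twoConnected hG
  obtain ⟨u, v, huv, hsetuv⟩ := Set.ncard_eq_two.mp htwo
  have humem : u ∈ U ∩ vertSet F := hsetuv ▸ (by left; rfl)
  have hvmem : v ∈ U ∩ vertSet F := hsetuv ▸ (by right; rfl)
  have hnotU : ∀ w : V, w ∈ vertSet F → w ≠ u → w ≠ v → w ∉ U := by
    intro w hwS hwu hwv hwU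
    have : w ∈ ({u, v} : Set V) := hsetuv ▸ ⟨hwU, hwS⟩
    rcases this with h | h
    · exact hwu h
    · exact hwv h
  -- finset versions
  set sF : Finset V := (Set.toFinite (vertSet F)).toFinset with hsFdef
  have hsF : ∀ w : V, w ∈ sF ↔ w ∈ vertSet F := fun w => Set.Finite.mem_toFinset _
  have htree' : H.edgeFinset.card + 1 = sF.card := by
    have h1 : F.ncard = H.edgeFinset.card := by
      rw [← hHE, Set.ncard_eq_toFinset_card']
      simp [edgeFinset]
    have h2 : (vertSet F).ncard = sF.card := Set.ncard_eq_toFinset_card _ _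
    rw [← h1, ← h2]
    exact htree
  have husF : u ∈ sF := (hsF u).mpr humem.2
  have hvsF : v ∈ sF.erase u := Finset.mem_erase.mpr ⟨huv.symm, (hsF v).mpr hvmem.2⟩
  set s2 : Finset V := (sF.erase u).erase v with hs2def
  have hs2mem : ∀ w : V, w ∈ s2 ↔ w ∈ sF ∧ w ≠ u ∧ w ≠ v := by
    intro w
    simp only [hs2def, Finset.mem_erase]
    tauto
  have hlow : ∀ w ∈ s2, 2 ≤ H.degree w := by
    intro w hw
    obtain ⟨hwsF, hwu, hwv⟩ := (hs2mem w).mp hw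
    have hwU : w ∉ U := hnotU w ((hsF w).mp hwsF) hwu hwv
    rw [hdge w hwU]
    exact hmin w
  have hsum_univ : ∑ w, H.degree w = 2 * H.edgeFinset.card :=
    H.sum_degrees_eq_twice_card_edges
  have hsum_s : ∑ w ∈ sF, H.degree w = ∑ w, H.degree w :=
    Finset.sum_subset (Finset.subset_univ sF)
      (fun w _ hw => hout w (fun h => hw ((hsF w).mpr h)))
  have e1 : H.degree u + ∑ w ∈ sF.erase u, H.degree w = ∑ w ∈ sF, H.degree w :=
    Finset.add_sum_erase sF (fun w => H.degree w) husF
  have e2 : H.degree v + ∑ w ∈ s2, H.degree w = ∑ w ∈ sF.erase u, H.degree w :=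
    Finset.add_sum_erase (sF.erase u) (fun w => H.degree w) hvsF
  have hcard2 : s2.card + 2 = sF.card := by
    rw [hs2def, Finset.card_erase_of_mem hvsF, Finset.card_erase_of_mem husF]
    have h1 : 0 < sF.card := Finset.card_pos.mpr ⟨u, husF⟩
    have h2 : 0 < (sF.erase u).card := Finset.card_pos.mpr ⟨v, hvsF⟩
    rw [Finset.card_erase_of_mem husF] at h2
    omega
  have hsum_low : 2 * s2.card ≤ ∑ w ∈ s2, H.degree w := by
    have := Finset.card_nsmul_le_sum s2 _ 2 hlow
    rwa [smul_eq_mul, mul_comm] at this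
  have hdegu : H.degree u = 1 ∧ H.degree v = 1 ∧
      ∑ w ∈ s2, H.degree w = 2 * s2.card := by
    have hu1 := hin u humem.2
    have hv1 := hin v hvmem.2
    omega
  obtain ⟨hdegu, hdegv, hsum_s2⟩ := hdegu
  have hdeg2 : ∀ w ∈ s2, H.degree w = 2 := by
    by_contra h
    push_neg at h
    obtain ⟨w0, hw0, hne⟩ := h
    have h3 : 2 < H.degree w0 := lt_of_le_of_ne (hlow w0 hw0) (Ne.symm hne)
    have hlt := Finset.sum_lt_sum (f := fun _ => 2) (g := fun w => H.degree w)
      (fun i hi => hlow i hi) ⟨w0, hw0, h3⟩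
    have hlt' : ∑ _w ∈ s2, 2 < ∑ w ∈ s2, H.degree w := hlt
    have hconst : ∑ _w ∈ s2, 2 = s2.card * 2 := by
      rw [Finset.sum_const, smul_eq_mul]
    omega
  have hdegall : ∀ w : V, H.degree w ≤ 2 := by
    intro w
    rcases em (w ∈ vertSet F) with hwS | hwS
    · rcases em (w = u) with rfl | hwu
      · omega
      · rcases em (w = v) with rfl | hwv
        · omega
        · rw [hdeg2 w ((hs2mem w).mpr ⟨(hsF w).mpr hwS, hwu, hwv⟩)]
    · rw [hout w hwS]; omega
  obtain ⟨v', hv'u, hv'1, W, hWpath, hWedges⟩ :=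
    aux_path H.edgeFinset.card H instH le_rfl hdegall u hdegu
  -- identify v' = v
  have hv'S : v' ∈ vertSet F := by
    rw [hS]
    obtain ⟨x, hx⟩ := Finset.card_eq_one.mp hv'1
    exact ⟨x, (H.mem_neighborFinset v' x).mp (by simp [hx])⟩
  have hv'U : v' ∈ U := by
    by_contra h
    have := hdge v' h
    have := hmin v'
    omega
  have hv'v : v' = v := by
    have : v' ∈ ({u, v} : Set V) := hsetuv ▸ ⟨hv'U, hv'S⟩
    rcases this with h | h
    · exact absurd h hv'u
    · exact h
  subst hv'v
  -- coverage: every edge of F is reachable from u in H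
  have hcov : ∀ e ∈ F, ∃ a ∈ e, H.Reachable u a := by
    intro e
    induction e using Sym2.ind with
    | _ a b =>
      intro heF
      by_contra hnr
      push_neg at hnr
      have hadjab : H.Adj a b := (H.mem_edgeSet).mp (hHE ▸ heF)
      have haC : a ∈ {w : V | H.Reachable a w} := Set.mem_setOf_eq ▸ Reachable.refl a
      have huC : u ∉ {w : V | H.Reachable a w} := by
        intro h
        exact hnr a (Sym2.mem_mk_left a b) (Reachable.symm h)
      have hvC : v' ∉ {w : V | H.Reachable a w} := by
        intro h
        have hruv : H.Reachable u v' := ⟨W⟩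
        exact hnr a (Sym2.mem_mk_left a b) (hruv.trans (Reachable.symm h))
      have hclosed : ∀ w ∈ {w : V | H.Reachable a w}, ∀ z, G.Adj w z →
          z ∈ {w : V | H.Reachable a w} := by
        intro w hw z hz
        have hw' : H.Reachable a w := hw
        have hwS : w ∈ vertSet F := by
          rcases em (w = a) with rfl | hwa
          · exact (hS w).mpr ⟨b, hadjab⟩
          · obtain ⟨y, hy⟩ := exists_adj_of_reachable hw'.symm hwa
            exact (hS w).mpr ⟨y, hy⟩
        have hwu : w ≠ u := fun h => huC (h ▸ hw)
        have hwv : w ≠ v' := fun h => hvC (h ▸ hw)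
        have hwU : w ∉ U := hnotU w hwS hwu hwv
        exact hw'.trans ((hHadjG w z hwU).mpr hz).reachable
      exact huC (closed_reach hclosed haC (hG.1.preconnected a u))
  have hsubG : ∀ e ∈ W.edges, e ∈ G.edgeSet := by
    intro e he
    have h1 := ((hWedges e).mp he).1
    rw [hHE] at h1
    exact h1.1
  refine ⟨u, v', huv, hsetuv, W.transfer G hsubG, hWpath.transfer hsubG, ?_, ?_⟩
  · intro e
    rw [Walk.edges_transfer]
    constructor
    · intro he
      exact hHE ▸ ((hWedges e).mp he).1
    · intro he
      exact (hWedges e).mpr ⟨hHE.symm ▸ he, hcov e he⟩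
  · intro w hw hwu hwv
    rw [Walk.support_transfer] at hw
    have hrw : H.Reachable u w := reachable_of_mem_support W hw
    obtain ⟨y, hy⟩ := exists_adj_of_reachable hrw.symm hwu
    have hwS : w ∈ vertSet F := (hS w).mpr ⟨y, hy⟩
    have hwU : w ∉ U := hnotU w hwS hwu hwv
    have hdw : H.degree w = 2 := hdeg2 w ((hs2mem w).mpr ⟨(hsF w).mpr hwS, hwu, hwv⟩)
    have hGdw : G.degree w = 2 := by rw [← hdge w hwU]; exact hdw
    rw [← hGdw, ← G.card_neighborSet_eq_degree, Set.ncard_eq_toFinset_card',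
      Set.toFinset_card]
end
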